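/- Let n ≥ 2 and let L ∈ ℝ^{n×n} be Minkowski-symmetric and null negative semi-definite. If x ∈ ℝⁿ is a nonzero null vector with ⟨Lx,x⟩ = 0, then x is an eigenvector of L, i.e., there exists λ ∈ ℝ with L x = λ x. -/

import Mathlib

open Matrix Set

noncomputable section

/-- The Minkowski inner product on `ℝⁿ`: `⟨v,w⟩ = -v₀w₀ + Σ_{j≥1} vⱼwⱼ`. -/
def mink {n : ℕ} (v w : Fin n → ℝ) : ℝ :=
  ∑ j : Fin n, (if (j : ℕ) = 0 then -(v j * w j) else v j * w j)

/-- A vector is null if its Minkowski square vanishes. -/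
def IsNull {n : ℕ} (v : Fin n → ℝ) : Prop := mink v v = 0

/-- A matrix is symmetric with respect to the Minkowski inner product. -/
def MinkSymm {n : ℕ} (L : Matrix (Fin n) (Fin n) ℝ) : Prop :=
  ∀ v w : Fin n → ℝ, mink (L.mulVec v) w = mink v (L.mulVec w)

/-- A matrix is null negative-definite: `⟨Lv,v⟩ < 0` for all nonzero null `v`. -/
def NullNegDef {n : ℕ} (L : Matrix (Fin n) (Fin n) ℝ) : Prop :=
  ∀ v : Fin n → ℝ, v ≠ 0 → IsNull v → mink (L.mulVec v) v < 0

/-- A matrix is null negative semi-definite: `⟨Lv,v⟩ ≤ 0` for all null `v`. -/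
def NullNegSemi {n : ℕ} (L : Matrix (Fin n) (Fin n) ℝ) : Prop :=
  ∀ v : Fin n → ℝ, IsNull v → mink (L.mulVec v) v ≤ 0

/-- Entrywise derivative (within a set) of a matrix-valued function of a real variable. -/
def matDerivWithin {n : ℕ} (L : ℝ → Matrix (Fin n) (Fin n) ℝ) (s : Set ℝ) (t : ℝ) :
    Matrix (Fin n) (Fin n) ℝ :=
  Matrix.of fun i j => derivWithin (fun u => L u i j) s t

/-!
Let `z` be `x` with its time coordinate negated: `z` is null and `⟨x, z⟩ = x ⬝ᵥ x > 0`. For `u`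
orthogonal to `x` and `z`, the curve `v(s) = x + s u + k s² z` stays on the null cone for a suitable
`k`, so `s ↦ ⟨L v(s), v(s)⟩` is a nonpositive quartic vanishing at `0`, and its linear coefficient
`2 ⟨Lx, u⟩` vanishes. Since the form is nondegenerate, `Lx` then lies in the plane spanned by `x`
and `z`, and `⟨Lx, x⟩ = 0` makes it a multiple of `x`.
-/

section

variable {n : ℕ}

lemma mink_comm (v w : Fin n → ℝ) : mink v w = mink w v := by
  unfold mink
  refine Finset.sum_congr rfl fun j _ => ?_
  rw [mul_comm]

lemma mink_add_left (v w u : Fin n → ℝ) : mink (v + w) u = mink v u + mink w u := by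
  unfold mink
  rw [← Finset.sum_add_distrib]
  refine Finset.sum_congr rfl fun j _ => ?_
  simp only [Pi.add_apply]
  split_ifs <;> ring

lemma mink_smul_left (c : ℝ) (v u : Fin n → ℝ) : mink (c • v) u = c * mink v u := by
  unfold mink
  rw [Finset.mul_sum]
  refine Finset.sum_congr rfl fun j _ => ?_
  simp only [Pi.smul_apply, smul_eq_mul]
  split_ifs <;> ring

lemma mink_sub_left (v w u : Fin n → ℝ) : mink (v - w) u = mink v u - mink w u := by
  unfold mink
  rw [← Finset.sum_sub_distrib]
  refine Finset.sum_congr rfl fun j _ => ?_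
  simp only [Pi.sub_apply]
  split_ifs <;> ring

lemma mink_add_right (u v w : Fin n → ℝ) : mink u (v + w) = mink u v + mink u w := by
  rw [mink_comm, mink_add_left, mink_comm v, mink_comm w]

lemma mink_sub_right (u v w : Fin n → ℝ) : mink u (v - w) = mink u v - mink u w := by
  rw [mink_comm, mink_sub_left, mink_comm v, mink_comm w]

lemma mink_smul_right (c : ℝ) (u v : Fin n → ℝ) : mink u (c • v) = c * mink u v := by
  rw [mink_comm, mink_smul_left, mink_comm v]

def timeFlip (v : Fin n → ℝ) : Fin n → ℝ := fun j => if (j : ℕ) = 0 then -v j else v j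

lemma timeFlip_timeFlip (v : Fin n → ℝ) : timeFlip (timeFlip v) = v := by
  funext j
  unfold timeFlip
  split_ifs <;> simp

lemma mink_eq_dotProduct_timeFlip (v w : Fin n → ℝ) : mink v w = v ⬝ᵥ timeFlip w := by
  unfold mink dotProduct timeFlip
  refine Finset.sum_congr rfl fun j _ => ?_
  split_ifs <;> ring

lemma mink_timeFlip_timeFlip (v w : Fin n → ℝ) : mink (timeFlip v) (timeFlip w) = mink v w := by
  unfold mink timeFlip
  refine Finset.sum_congr rfl fun j _ => ?_
  split_ifs <;> ring

lemma mink_timeFlip_right_self_ne_zero {v : Fin n → ℝ} (hv : v ≠ 0) : mink v (timeFlip v) ≠ 0 := by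
  rw [mink_eq_dotProduct_timeFlip, timeFlip_timeFlip]
  exact mt dotProduct_self_eq_zero.mp hv

lemma IsNull.mink_self {v : Fin n → ℝ} (hv : IsNull v) : mink v v = 0 := hv

lemma IsNull.timeFlip {v : Fin n → ℝ} (hv : IsNull v) : IsNull (timeFlip v) :=
  (mink_timeFlip_timeFlip v v).trans hv

lemma mink_ext {v v' : Fin n → ℝ} (h : ∀ w, mink v w = mink v' w) : v = v' := by
  refine dotProduct_eq v v' fun w => ?_
  simpa only [mink_eq_dotProduct_timeFlip, timeFlip_timeFlip] using h (timeFlip w)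

-- Write `w = u + a x + b z` with `u` orthogonal to `x` and `z`.
lemma eq_smul_of_mink_orthogonal {x z y : Fin n → ℝ} (hx : IsNull x) (hz : IsNull z)
    (hxz : mink x z ≠ 0) (hyx : mink y x = 0)
    (hy : ∀ u, mink x u = 0 → mink z u = 0 → mink y u = 0) :
    y = (mink y z / mink x z) • x := by
  refine mink_ext fun w => ?_
  set a := mink z w / mink x z
  set b := mink x w / mink x z
  have hu := hy (w - a • x - b • z)
    (by simp only [mink_sub_right, mink_smul_right, hx.mink_self, b]; field_simp; ring)
    (by
      simp only [mink_sub_right, mink_smul_right, hz.mink_self, mink_comm z x, a]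
      field_simp
      ring)
  simp only [mink_sub_right, mink_smul_right, hyx, b] at hu
  rw [mink_smul_left]
  field_simp at hu ⊢
  linarith

lemma eq_zero_of_forall_quartic_nonpos (β γ δ ε : ℝ)
    (h : ∀ s : ℝ, β * s + γ * s ^ 2 + δ * s ^ 3 + ε * s ^ 4 ≤ 0) : β = 0 := by
  have hderiv : HasDerivAt (fun s : ℝ => β * s + γ * s ^ 2 + δ * s ^ 3 + ε * s ^ 4) β 0 := by
    have := ((((hasDerivAt_id (0 : ℝ)).const_mul β).add
      ((hasDerivAt_pow 2 (0 : ℝ)).const_mul γ)).add ((hasDerivAt_pow 3 (0 : ℝ)).const_mul δ)).add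
      ((hasDerivAt_pow 4 (0 : ℝ)).const_mul ε)
    exact this.congr_deriv (by norm_num)
  refine IsLocalMax.hasDerivAt_eq_zero (Filter.Eventually.of_forall fun s => ?_) hderiv
  simpa using h s

-- `⟨v, v⟩ = s² ⟨u, u⟩ + 2 k s² ⟨x, z⟩` for `v = x + s u + k s² z`.
lemma isNull_add_smul_add_smul {x z u : Fin n → ℝ} (hx : IsNull x) (hz : IsNull z)
    (hxz : mink x z ≠ 0) (hxu : mink x u = 0) (hzu : mink z u = 0) (s : ℝ) :
    IsNull (x + s • u + (-(mink u u / (2 * mink x z)) * s ^ 2) • z) := by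
  have hux : mink u x = 0 := by rwa [mink_comm]
  have huz : mink u z = 0 := by rwa [mink_comm]
  unfold IsNull
  simp only [mink_add_left, mink_add_right, mink_smul_left, mink_smul_right, hx.mink_self,
    hz.mink_self, hxu, hzu, hux, huz, mink_comm z x]
  field_simp
  ring

theorem NullNegSemi.mink_mulVec_eq_zero {L : Matrix (Fin n) (Fin n) ℝ} (hsemi : NullNegSemi L)
    (hsymm : MinkSymm L) {x z u : Fin n → ℝ} (hx : IsNull x) (hLx : mink (L *ᵥ x) x = 0)
    (hz : IsNull z) (hxz : mink x z ≠ 0) (hxu : mink x u = 0) (hzu : mink z u = 0) :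
    mink (L *ᵥ x) u = 0 := by
  set k := -(mink u u / (2 * mink x z))
  have hLux : mink (L *ᵥ u) x = mink (L *ᵥ x) u := by rw [hsymm, mink_comm]
  suffices 2 * mink (L *ᵥ x) u = 0 by linarith
  refine eq_zero_of_forall_quartic_nonpos _
    (mink (L *ᵥ u) u + k * (mink (L *ᵥ x) z + mink (L *ᵥ z) x))
    (k * (mink (L *ᵥ u) z + mink (L *ᵥ z) u)) (k ^ 2 * mink (L *ᵥ z) z) fun s => ?_
  calc _ = mink (L *ᵥ (x + s • u + (k * s ^ 2) • z)) (x + s • u + (k * s ^ 2) • z) := by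
        simp only [mulVec_add, mulVec_smul, mink_add_left, mink_add_right, mink_smul_left,
          mink_smul_right, hLx, hLux]
        ring
    _ ≤ 0 := hsemi _ (isNull_add_smul_add_smul hx hz hxz hxu hzu s)

end

theorem stmt_1_general {n : ℕ} (L : Matrix (Fin n) (Fin n) ℝ)
    (hsymm : MinkSymm L) (hsemi : NullNegSemi L)
    (x : Fin n → ℝ) (hx : x ≠ 0) (hnull : IsNull x)
    (hLx : mink (L.mulVec x) x = 0) :
    ∃ lam : ℝ, L.mulVec x = lam • x := by
  have hxz : mink x (timeFlip x) ≠ 0 := mink_timeFlip_right_self_ne_zero hx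
  exact ⟨_, eq_smul_of_mink_orthogonal hnull hnull.timeFlip hxz hLx fun _ hxu hzu =>
    hsemi.mink_mulVec_eq_zero hsymm hnull hLx hnull.timeFlip hxz hxu hzu⟩

/-- for a Minkowski-symmetric, null negative semi-definite matrix `L`,
any nonzero null vector `x` with `⟨Lx,x⟩ = 0` is an eigenvector of `L`. -/
theorem stmt_1 {n : ℕ} (hn : 2 ≤ n) (L : Matrix (Fin n) (Fin n) ℝ)
    (hsymm : MinkSymm L) (hsemi : NullNegSemi L)
    (x : Fin n → ℝ) (hx : x ≠ 0) (hnull : IsNull x)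
    (hLx : mink (L.mulVec x) x = 0) :
    ∃ lam : ℝ, L.mulVec x = lam • x :=
  stmt_1_general L hsymm hsemi x hx hnull hLx
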